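/- Euclidean-loss bound (deterministic core of Theorem 1, inequality (19)): assume y = Xβ* + ε with (2/n)·max_{k,j} |X_{kj}^T ε| ≤ λα, let s = |G(β*)|, and assume the REgroup(κ, s) hypothesis holds. Then every minimizer β̂ of Q satisfies ‖β̂ − β*‖₂ ≤ (2√s + 1) · 8√s · λα / κ². -/

import Mathlib

/-!
Write `Δ = β̂ - β*`. Comparing `Q β̂ ≤ Q β*` and bounding the noise term by `(λα/2)‖Δ‖₁` gives
the basic inequality. On a group of the support the LES penalty is `α`-Lipschitz for `‖·‖₁`
(log-sum-exp is 1-Lipschitz), while on a group where `β*` vanishes Jensen's inequality makes it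
grow by at least `α‖Δ_k‖₁ / p_k`. With the weights `p_k` this yields
`‖XΔ‖²/n + λα‖Δ_{Gᶜ}‖₁ ≤ λα ∑_{k ∈ G} (1 + 2p_k)‖Δ_k‖₁`, so `Δ` lies in the REgroup cone, and
Cauchy–Schwarz bounds the right side by `2√s λα t` with `t² = ∑_{k ∈ G} p_k (1 + p_k)² ‖Δ_k‖₂²`.
The RE condition then gives `κ² t ≤ 8√s λα`, and `‖Δ‖₂ ≤ t + ‖Δ_{Gᶜ}‖₁ ≤ (1 + 2√s) t`.
-/

open Finset Matrix Real

noncomputable def logSumExp {ι : Type*} [Fintype ι] (x : ι → ℝ) : ℝ := log (∑ i, exp (x i))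

section LogSumExp

variable {ι : Type*} [Fintype ι]

theorem logSumExp_zero : logSumExp (fun _ : ι => (0 : ℝ)) = log (Fintype.card ι) := by
  simp [logSumExp]

variable [Nonempty ι]

theorem logSumExp_sub_logSumExp_le (x y : ι → ℝ) :
    logSumExp x - logSumExp y ≤ ∑ i, |x i - y i| := by
  have hle : ∑ i, exp (x i) ≤ exp (∑ i, |x i - y i|) * ∑ i, exp (y i) := by
    rw [mul_sum]
    refine sum_le_sum fun i _ => ?_
    rw [← exp_add, exp_le_exp]
    have := single_le_sum (fun j _ => abs_nonneg (x j - y j)) (mem_univ i)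
    linarith [le_abs_self (x i - y i)]
  have hy : 0 < ∑ i, exp (y i) := sum_pos (fun i _ => exp_pos _) univ_nonempty
  have := log_le_log (sum_pos (fun i _ => exp_pos _) univ_nonempty) hle
  rw [log_mul (exp_ne_zero _) hy.ne', log_exp] at this
  unfold logSumExp
  linarith

theorem log_card_add_mean_le_logSumExp (x : ι → ℝ) :
    log (Fintype.card ι) + (∑ i, x i) / Fintype.card ι ≤ logSumExp x := by
  have hcard : (0 : ℝ) < Fintype.card ι := by exact_mod_cast Fintype.card_pos
  have hJensen := convexOn_exp.map_sum_le (t := univ) (w := fun _ => (Fintype.card ι : ℝ)⁻¹)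
    (p := x) (fun _ _ => by positivity) (by simp [hcard.ne']) (fun i _ => Set.mem_univ _)
  simp only [smul_eq_mul, ← mul_sum] at hJensen
  have := log_le_log (exp_pos _) hJensen
  rw [log_exp, log_mul (by positivity) (sum_pos (fun i _ => exp_pos _) univ_nonempty).ne',
    log_inv] at this
  unfold logSumExp
  rw [div_eq_inv_mul]
  linarith

theorem logSumExp_abs_sub_le {α : ℝ} (hα : 0 ≤ α) (a b : ι → ℝ) :
    logSumExp (fun i => α * |a i|) - logSumExp (fun i => α * |b i|) ≤ α * ∑ i, |b i - a i| := by
  refine (logSumExp_sub_logSumExp_le _ _).trans ?_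
  rw [mul_sum]
  refine sum_le_sum fun i _ => ?_
  rw [← mul_sub, abs_mul, abs_of_nonneg hα, abs_sub_comm (b i)]
  exact mul_le_mul_of_nonneg_left (abs_abs_sub_abs_le_abs_sub _ _) hα

theorem card_mul_logSumExp_zero_sub_le (α : ℝ) (b : ι → ℝ) :
    Fintype.card ι * (logSumExp (fun _ : ι => (0 : ℝ)) - logSumExp (fun i => α * |b i|)) ≤
      -(α * ∑ i, |b i|) := by
  have hcard : (0 : ℝ) < Fintype.card ι := by exact_mod_cast Fintype.card_pos
  have hmean := mul_le_mul_of_nonneg_left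
    (log_card_add_mean_le_logSumExp (fun i => α * |b i|)) hcard.le
  have hcancel : (Fintype.card ι : ℝ) * ((∑ i, α * |b i|) / Fintype.card ι) =
      α * ∑ i, |b i| := by
    rw [← mul_sum]; field_simp
  rw [mul_add, hcancel] at hmean
  rw [logSumExp_zero]
  linarith

end LogSumExp

section Groups

variable {γ : Type*} {p : γ → ℕ}

def groupL1 (Δ : (Σ k, Fin (p k)) → ℝ) (k : γ) : ℝ := ∑ j, |Δ ⟨k, j⟩|

def groupSqNorm (Δ : (Σ k, Fin (p k)) → ℝ) (k : γ) : ℝ := ∑ j, Δ ⟨k, j⟩ ^ 2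

def groupWeightedSqNorm (G : Finset γ) (Δ : (Σ k, Fin (p k)) → ℝ) : ℝ :=
  ∑ k ∈ G, (p k : ℝ) * (1 + p k) ^ 2 * groupSqNorm Δ k

noncomputable def lesPenalty [Fintype γ] (α : ℝ) (β : (Σ k, Fin (p k)) → ℝ) : ℝ :=
  ∑ k, (p k : ℝ) * logSumExp (fun j : Fin (p k) => α * |β ⟨k, j⟩|)

theorem groupL1_nonneg (Δ : (Σ k, Fin (p k)) → ℝ) (k : γ) : 0 ≤ groupL1 Δ k :=
  sum_nonneg fun _ _ => abs_nonneg _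

theorem groupSqNorm_nonneg (Δ : (Σ k, Fin (p k)) → ℝ) (k : γ) : 0 ≤ groupSqNorm Δ k :=
  sum_nonneg fun _ _ => sq_nonneg _

theorem sum_abs_eq_sum_groupL1 [Fintype γ] (Δ : (Σ k, Fin (p k)) → ℝ) :
    ∑ j, |Δ j| = ∑ k, groupL1 Δ k :=
  Fintype.sum_sigma _

theorem groupL1_sq_le (Δ : (Σ k, Fin (p k)) → ℝ) (k : γ) :
    groupL1 Δ k ^ 2 ≤ p k * groupSqNorm Δ k := by
  simpa [groupL1, groupSqNorm] using
    sq_sum_le_card_mul_sum_sq (s := univ) (f := fun j => |Δ ⟨k, j⟩|)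

theorem groupSqNorm_le_groupL1_sq (Δ : (Σ k, Fin (p k)) → ℝ) (k : γ) :
    groupSqNorm Δ k ≤ groupL1 Δ k ^ 2 := by
  simpa [groupL1, groupSqNorm] using
    sum_sq_le_sq_sum_of_nonneg (s := univ) (f := fun j => |Δ ⟨k, j⟩|) fun _ _ => abs_nonneg _

theorem lesPenalty_sub_le [Fintype γ] [DecidableEq γ] (hp : ∀ k, 0 < p k) {α : ℝ} (hα : 0 ≤ α)
    {G : Finset γ} {βstar β : (Σ k, Fin (p k)) → ℝ} (hsupp : ∀ k ∉ G, ∀ j, βstar ⟨k, j⟩ = 0) :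
    lesPenalty α βstar - lesPenalty α β ≤
      α * (∑ k ∈ G, p k * groupL1 (β - βstar) k - ∑ k ∈ Gᶜ, groupL1 (β - βstar) k) := by
  rw [lesPenalty, lesPenalty, ← sum_sub_distrib, ← sum_add_sum_compl G, mul_sub, mul_sum,
    mul_sum, sub_eq_add_neg, ← sum_neg_distrib]
  refine add_le_add (sum_le_sum fun k _ => ?_) (sum_le_sum fun k hk => ?_)
  all_goals have : Nonempty (Fin (p k)) := Fin.pos_iff_nonempty.mp (hp k)
  · have := logSumExp_abs_sub_le hα (fun j => βstar ⟨k, j⟩) (fun j => β ⟨k, j⟩)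
    rw [← mul_sub, mul_left_comm]
    exact mul_le_mul_of_nonneg_left this (Nat.cast_nonneg _)
  · have hzero : (fun j : Fin (p k) => α * |βstar ⟨k, j⟩|) = fun _ => 0 := by
      funext j; simp [hsupp k (mem_compl.mp hk) j]
    have := card_mul_logSumExp_zero_sub_le α (fun j => β ⟨k, j⟩)
    simp only [Fintype.card_fin] at this
    simpa [← mul_sub, hzero, groupL1, hsupp k (mem_compl.mp hk)] using this

theorem sum_mul_groupL1_le (G : Finset γ) (Δ : (Σ k, Fin (p k)) → ℝ) :
    ∑ k ∈ G, (1 + 2 * p k) * groupL1 Δ k ≤ 2 * √(#G : ℝ) * √(groupWeightedSqNorm G Δ) := by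
  have hCS :=
    Real.sum_mul_le_sqrt_mul_sqrt G (fun _ => 1) (fun k => (1 + 2 * p k) * groupL1 Δ k)
  simp only [one_mul, one_pow, sum_const, nsmul_eq_mul, mul_one] at hCS
  have hsq : ∑ k ∈ G, ((1 + 2 * p k) * groupL1 Δ k) ^ 2 ≤ 4 * groupWeightedSqNorm G Δ := by
    rw [groupWeightedSqNorm, mul_sum]
    refine sum_le_sum fun k _ => ?_
    have hL1 := groupL1_sq_le Δ k
    have hweight : (1 + 2 * (p k : ℝ)) ^ 2 ≤ 4 * (1 + p k) ^ 2 := by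
      nlinarith [(p k).cast_nonneg (α := ℝ)]
    calc ((1 + 2 * p k) * groupL1 Δ k) ^ 2 = (1 + 2 * (p k : ℝ)) ^ 2 * groupL1 Δ k ^ 2 := by ring
      _ ≤ 4 * (1 + p k) ^ 2 * (p k * groupSqNorm Δ k) := by gcongr
      _ = 4 * (p k * (1 + p k) ^ 2 * groupSqNorm Δ k) := by ring
  calc _ ≤ √(#G : ℝ) * √(∑ k ∈ G, ((1 + 2 * p k) * groupL1 Δ k) ^ 2) := hCS
    _ ≤ √(#G : ℝ) * √(4 * groupWeightedSqNorm G Δ) := by gcongr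
    _ = 2 * √(#G : ℝ) * √(groupWeightedSqNorm G Δ) := by
      rw [sqrt_mul (by norm_num), show (4 : ℝ) = 2 ^ 2 by norm_num, sqrt_sq (by norm_num)]
      ring

theorem sqrt_sum_sq_le [Fintype γ] [DecidableEq γ] (hp : ∀ k, 0 < p k) (G : Finset γ)
    (Δ : (Σ k, Fin (p k)) → ℝ) :
    √(∑ j, Δ j ^ 2) ≤ √(groupWeightedSqNorm G Δ) + ∑ k ∈ Gᶜ, groupL1 Δ k := by
  have hin : ∑ k ∈ G, groupSqNorm Δ k ≤ groupWeightedSqNorm G Δ := by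
    refine sum_le_sum fun k _ => le_mul_of_one_le_left (groupSqNorm_nonneg Δ k) ?_
    have : (1 : ℝ) ≤ p k := by exact_mod_cast hp k
    nlinarith
  have hout : ∑ k ∈ Gᶜ, groupSqNorm Δ k ≤ (∑ k ∈ Gᶜ, groupL1 Δ k) ^ 2 :=
    (sum_le_sum fun k _ => groupSqNorm_le_groupL1_sq Δ k).trans
      (sum_sq_le_sq_sum_of_nonneg fun k _ => groupL1_nonneg Δ k)
  have hsplit : ∑ j, Δ j ^ 2 = ∑ k ∈ G, groupSqNorm Δ k + ∑ k ∈ Gᶜ, groupSqNorm Δ k := by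
    rw [sum_add_sum_compl, Fintype.sum_sigma]; rfl
  have hR : 0 ≤ ∑ k ∈ Gᶜ, groupL1 Δ k := sum_nonneg fun k _ => groupL1_nonneg Δ k
  have hW : 0 ≤ groupWeightedSqNorm G Δ :=
    hin.trans' (sum_nonneg fun k _ => groupSqNorm_nonneg Δ k)
  refine sqrt_le_iff.mpr ⟨by positivity, ?_⟩
  rw [hsplit, add_sq, sq_sqrt hW]
  linarith [mul_nonneg (sqrt_nonneg (groupWeightedSqNorm G Δ)) hR]

end Groups

section LeastSquares

variable {ι : Type*} [Fintype ι] {n : ℕ}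

theorem dotProduct_le_mul_sum_abs {u : ι → ℝ} {c : ℝ} (hu : ∀ i, |u i| ≤ c) (w : ι → ℝ) :
    u ⬝ᵥ w ≤ c * ∑ i, |w i| := by
  rw [dotProduct, mul_sum]
  refine sum_le_sum fun i _ => ?_
  calc u i * w i ≤ |u i| * |w i| := (le_abs_self _).trans (abs_mul _ _).le
    _ ≤ c * |w i| := mul_le_mul_of_nonneg_right (hu i) (abs_nonneg _)

theorem leastSquares_basic_inequality (X : Matrix (Fin n) ι ℝ) {βstar βh : ι → ℝ}
    {ε y : Fin n → ℝ} (hy : y = X *ᵥ βstar + ε) (P : (ι → ℝ) → ℝ)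
    (hmin : IsMinOn (fun β => 1 / (2 * (n : ℝ)) * ∑ i, (y i - (X *ᵥ β) i) ^ 2 + P β)
      Set.univ βh) :
    1 / (2 * (n : ℝ)) * ∑ i, (X *ᵥ (βh - βstar)) i ^ 2 ≤
      1 / n * (ε ⬝ᵥ X *ᵥ (βh - βstar)) + (P βstar - P βh) := by
  have hstar : ∀ i, y i - (X *ᵥ βstar) i = ε i := by simp [hy]
  have hhat : ∀ i, y i - (X *ᵥ βh) i = ε i - (X *ᵥ (βh - βstar)) i := by
    intro i; simp [hy, mulVec_sub]; ring
  have hexpand : ∑ i, (y i - (X *ᵥ βh) i) ^ 2 = ∑ i, ε i ^ 2 -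
      2 * (ε ⬝ᵥ X *ᵥ (βh - βstar)) + ∑ i, (X *ᵥ (βh - βstar)) i ^ 2 := by
    simp only [hhat, sub_sq, sum_add_distrib, sum_sub_distrib, dotProduct, mul_sum, mul_assoc]
  have := isMinOn_iff.mp hmin βstar (Set.mem_univ _)
  simp only [hstar, hexpand] at this
  have hhalf : 1 / (2 * (n : ℝ)) * (2 * (ε ⬝ᵥ X *ᵥ (βh - βstar))) =
      1 / n * (ε ⬝ᵥ X *ᵥ (βh - βstar)) := by ring
  linarith

end LeastSquares

section Objective

variable {γ : Type*} [Fintype γ] [DecidableEq γ] {p : γ → ℕ} {n : ℕ}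

noncomputable def lesObjective (X : Matrix (Fin n) (Σ k, Fin (p k)) ℝ) (y : Fin n → ℝ)
    (lam α : ℝ) (β : (Σ k, Fin (p k)) → ℝ) : ℝ :=
  1 / (2 * (n : ℝ)) * ∑ i, (y i - (X *ᵥ β) i) ^ 2 + lam * lesPenalty α β

theorem lesObjective_cone_inequality (hn : 0 < n) (hp : ∀ k, 0 < p k) {lam α : ℝ}
    (hlam : 0 ≤ lam) (hα : 0 ≤ α) (X : Matrix (Fin n) (Σ k, Fin (p k)) ℝ)
    {βstar βh : (Σ k, Fin (p k)) → ℝ} {ε y : Fin n → ℝ} (hy : y = X *ᵥ βstar + ε)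
    (hnoise : ∀ j, 2 / (n : ℝ) * |(Xᵀ *ᵥ ε) j| ≤ lam * α)
    {G : Finset γ} (hsupp : ∀ k ∉ G, ∀ j, βstar ⟨k, j⟩ = 0)
    (hmin : IsMinOn (lesObjective X y lam α) Set.univ βh) :
    (∑ i, (X *ᵥ (βh - βstar)) i ^ 2) / n + lam * α * ∑ k ∈ Gᶜ, groupL1 (βh - βstar) k ≤
      lam * α * ∑ k ∈ G, (1 + 2 * p k) * groupL1 (βh - βstar) k := by
  set Δ := βh - βstar
  have hnR : (0 : ℝ) < n := by exact_mod_cast hn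
  have hbasic := leastSquares_basic_inequality X hy (fun β => lam * lesPenalty α β) hmin
  have hnoise' : ∀ j, |(Xᵀ *ᵥ ε) j| ≤ n * (lam * α) / 2 := fun j => by
    have := hnoise j
    rw [div_mul_eq_mul_div, div_le_iff₀ hnR] at this
    linarith
  have hnoiseΔ : 1 / n * (ε ⬝ᵥ X *ᵥ Δ) ≤
      lam * α / 2 * (∑ k ∈ G, groupL1 Δ k + ∑ k ∈ Gᶜ, groupL1 Δ k) := by
    have := dotProduct_le_mul_sum_abs hnoise' Δ
    rw [mulVec_transpose, ← dotProduct_mulVec, sum_abs_eq_sum_groupL1,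
      ← sum_add_sum_compl G] at this
    rw [div_mul_eq_mul_div, div_le_iff₀ hnR]
    linarith
  have hpen := mul_le_mul_of_nonneg_left (lesPenalty_sub_le hp hα hsupp (β := βh)) hlam
  have hweights : ∑ k ∈ G, (1 + 2 * (p k : ℝ)) * groupL1 Δ k =
      ∑ k ∈ G, groupL1 Δ k + 2 * ∑ k ∈ G, p k * groupL1 Δ k := by
    simp only [add_mul, sum_add_distrib, mul_sum, one_mul, mul_assoc]
  rw [hweights]
  have hhalf : (∑ i, (X *ᵥ Δ) i ^ 2) / n = 2 * (1 / (2 * (n : ℝ)) * ∑ i, (X *ᵥ Δ) i ^ 2) := by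
    field_simp
  linarith

end Objective

theorem le_div_sq_of_restricted_eigenvalue {n κ Q t b : ℝ} (hn : 0 < n) (hκ : 0 < κ)
    (hQ : 0 ≤ Q) (ht : 0 ≤ t) (hb : 0 ≤ b) (hRE : κ * √n * t ≤ 2 * √Q) (hQb : Q / n ≤ b * t) :
    t ≤ 4 * b / κ ^ 2 := by
  have hsq : κ ^ 2 * n * t ^ 2 ≤ 4 * Q := by
    have := pow_le_pow_left₀ (by positivity) hRE 2
    rwa [mul_pow, mul_pow, mul_pow, sq_sqrt hn.le, sq_sqrt hQ, show (2 : ℝ) ^ 2 = 4 by norm_num]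
      at this
  rw [div_le_iff₀ hn] at hQb
  rw [le_div_iff₀ (by positivity)]
  rcases ht.eq_or_lt with rfl | htpos
  · simpa using hb
  refine le_of_mul_le_mul_right ?_ (mul_pos hn htpos)
  nlinarith

theorem les_l2_bound_general (n K : ℕ) (hn : 0 < n)
    (p : Fin K → ℕ) (hp : ∀ k, 1 ≤ p k)
    (X : Fin n → (Σ k : Fin K, Fin (p k)) → ℝ)
    (βstar : (Σ k : Fin K, Fin (p k)) → ℝ) (ε y : Fin n → ℝ)
    (hmodel : ∀ i, y i = (∑ j : Σ k : Fin K, Fin (p k), X i j * βstar j) + ε i)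
    (lam α : ℝ) (hlam : 0 < lam) (hα : 0 < α)
    (hnoise : ∀ j : Σ k : Fin K, Fin (p k),
      (2 / (n : ℝ)) * |∑ i : Fin n, X i j * ε i| ≤ lam * α)
    (G : Finset (Fin K)) (hG : ∀ k, k ∈ G ↔ ∃ j : Fin (p k), βstar ⟨k, j⟩ ≠ 0)
    (s : ℕ) (hs : s = G.card)
    (κ : ℝ) (hκ : 0 < κ)
    (hRE : ∀ G' : Finset (Fin K), G'.card ≤ s →
      ∀ Δ : (Σ k : Fin K, Fin (p k)) → ℝ, Δ ≠ 0 →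
      (∑ k ∈ G'ᶜ, ∑ j : Fin (p k), |Δ ⟨k, j⟩|) ≤
        (∑ k ∈ G', (1 + 2 * (p k : ℝ)) * ∑ j : Fin (p k), |Δ ⟨k, j⟩|) →
      κ * Real.sqrt (n : ℝ) *
          Real.sqrt (∑ k ∈ G', (p k : ℝ) * (1 + (p k : ℝ)) ^ 2 * ∑ j : Fin (p k), (Δ ⟨k, j⟩) ^ 2) ≤
        2 * Real.sqrt (∑ i : Fin n, (∑ j : Σ k : Fin K, Fin (p k), X i j * Δ j) ^ 2))
    (βh : (Σ k : Fin K, Fin (p k)) → ℝ)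
    (hmin : IsMinOn
      (fun β : (Σ k : Fin K, Fin (p k)) → ℝ =>
        (1 / (2 * (n : ℝ))) * ∑ i : Fin n, (y i - ∑ j : Σ k : Fin K, Fin (p k), X i j * β j) ^ 2
          + lam * ∑ k : Fin K, (p k : ℝ) * Real.log (∑ j : Fin (p k), Real.exp (α * |β ⟨k, j⟩|)))
      Set.univ βh) :
    Real.sqrt (∑ j : Σ k : Fin K, Fin (p k), (βh j - βstar j) ^ 2) ≤
      (2 * Real.sqrt (s : ℝ) + 1) * (8 * Real.sqrt (s : ℝ) * (lam * α)) / κ ^ 2 := by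
  set Δ := βh - βstar
  set T := groupWeightedSqNorm G Δ
  set R := ∑ k ∈ Gᶜ, groupL1 Δ k
  set W := ∑ k ∈ G, (1 + 2 * (p k : ℝ)) * groupL1 Δ k
  have hnR : (0 : ℝ) < n := by exact_mod_cast hn
  have hsupp : ∀ k ∉ G, ∀ j, βstar ⟨k, j⟩ = 0 := fun k hk j => by
    by_contra h
    exact hk ((hG k).2 ⟨j, h⟩)
  have hcone : (∑ i, (X *ᵥ Δ) i ^ 2) / n + lam * α * R ≤ lam * α * W :=
    lesObjective_cone_inequality hn hp hlam.le hα.le X (funext hmodel) hnoise hsupp hmin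
  have hQ : 0 ≤ ∑ i, (X *ᵥ Δ) i ^ 2 := sum_nonneg fun _ _ => sq_nonneg _
  have hR : 0 ≤ R := sum_nonneg fun k _ => groupL1_nonneg Δ k
  have hlamα : 0 < lam * α := mul_pos hlam hα
  have hRW : R ≤ W := le_of_mul_le_mul_left (by linarith [div_nonneg hQ hnR.le]) hlamα
  have hW : W ≤ 2 * √(s : ℝ) * √T := hs ▸ sum_mul_groupL1_le G Δ
  have hQT : (∑ i, (X *ᵥ Δ) i ^ 2) / n ≤ 2 * √(s : ℝ) * (lam * α) * √T := by
    linarith [mul_nonneg hlamα.le hR, mul_le_mul_of_nonneg_left hW hlamα.le]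
  have hREΔ : κ * √n * √T ≤ 2 * √(∑ i, (X *ᵥ Δ) i ^ 2) := by
    by_cases hΔ : Δ = 0
    · simp [T, hΔ, groupWeightedSqNorm, groupSqNorm]
    · exact hRE G hs.ge Δ hΔ hRW
  have hT : √T ≤ 4 * (2 * √(s : ℝ) * (lam * α)) / κ ^ 2 :=
    le_div_sq_of_restricted_eigenvalue hnR hκ hQ (sqrt_nonneg _) (by positivity) hREΔ hQT
  calc √(∑ j, (βh j - βstar j) ^ 2) ≤ √T + R := sqrt_sum_sq_le hp G Δ
    _ ≤ (2 * √(s : ℝ) + 1) * √T := by linarith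
    _ ≤ (2 * √(s : ℝ) + 1) * (4 * (2 * √(s : ℝ) * (lam * α)) / κ ^ 2) := by gcongr
    _ = _ := by ring

/-- **Euclidean-loss bound** (deterministic core of Theorem 1, inequality (19)).
Assume `y = X β* + ε` with `(2/n) max_{k,j} |X kjᵀ ε| ≤ λ α`, let
`s = |G(β*)|`, and assume the REgroup(κ, s) hypothesis.  Then every minimizer
`β̂` of `Q` (with weights `w k = p k`) satisfies
`‖β̂ - β*‖₂ ≤ (2√s + 1) * 8√s * λ α / κ²`. -/
theorem les_l2_bound (n K : ℕ) (hn : 0 < n) (hK : 0 < K)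
    (p : Fin K → ℕ) (hp : ∀ k, 1 ≤ p k)
    (X : Fin n → (Σ k : Fin K, Fin (p k)) → ℝ)
    (βstar : (Σ k : Fin K, Fin (p k)) → ℝ) (ε y : Fin n → ℝ)
    (hmodel : ∀ i, y i = (∑ j : Σ k : Fin K, Fin (p k), X i j * βstar j) + ε i)
    (lam α : ℝ) (hlam : 0 < lam) (hα : 0 < α)
    (hnoise : ∀ j : Σ k : Fin K, Fin (p k),
      (2 / (n : ℝ)) * |∑ i : Fin n, X i j * ε i| ≤ lam * α)
    (G : Finset (Fin K)) (hG : ∀ k, k ∈ G ↔ ∃ j : Fin (p k), βstar ⟨k, j⟩ ≠ 0)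
    (s : ℕ) (hs : s = G.card)
    (κ : ℝ) (hκ : 0 < κ)
    (hRE : ∀ G' : Finset (Fin K), G'.card ≤ s →
      ∀ Δ : (Σ k : Fin K, Fin (p k)) → ℝ, Δ ≠ 0 →
      (∑ k ∈ G'ᶜ, ∑ j : Fin (p k), |Δ ⟨k, j⟩|) ≤
        (∑ k ∈ G', (1 + 2 * (p k : ℝ)) * ∑ j : Fin (p k), |Δ ⟨k, j⟩|) →
      κ * Real.sqrt (n : ℝ) *
          Real.sqrt (∑ k ∈ G', (p k : ℝ) * (1 + (p k : ℝ)) ^ 2 * ∑ j : Fin (p k), (Δ ⟨k, j⟩) ^ 2) ≤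
        2 * Real.sqrt (∑ i : Fin n, (∑ j : Σ k : Fin K, Fin (p k), X i j * Δ j) ^ 2))
    (βh : (Σ k : Fin K, Fin (p k)) → ℝ)
    (hmin : IsMinOn
      (fun β : (Σ k : Fin K, Fin (p k)) → ℝ =>
        (1 / (2 * (n : ℝ))) * ∑ i : Fin n, (y i - ∑ j : Σ k : Fin K, Fin (p k), X i j * β j) ^ 2
          + lam * ∑ k : Fin K, (p k : ℝ) * Real.log (∑ j : Fin (p k), Real.exp (α * |β ⟨k, j⟩|)))
      Set.univ βh) :
    Real.sqrt (∑ j : Σ k : Fin K, Fin (p k), (βh j - βstar j) ^ 2) ≤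
      (2 * Real.sqrt (s : ℝ) + 1) * (8 * Real.sqrt (s : ℝ) * (lam * α)) / κ ^ 2 :=
  les_l2_bound_general n K hn p hp X βstar ε y hmodel lam α hlam hα hnoise G hG s hs κ hκ hRE βh
    hmin
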